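/- (Tilted Gaussian path satisfies the continuity equation.) Let p_0 = N(0, I_d) be the standard Gaussian density on ℝ^d, fix b ∈ ℝ^d, δ > 0, τ ∈ (0,1), η > 0, and define a : [0,1] → ℝ by a(t) = 0 for 0 ≤ t ≤ τ and a(t) = η e^{δ(t−τ)} for τ < t ≤ 1 (so a'(t) = δ a(t) for almost every t). Define ψ_t(x) = a(t) bᵀx, Z_t = ∫ p_0(x) e^{−ψ_t(x)} dx, q_t(x) = Z_t^{−1} p_0(x) e^{−ψ_t(x)}, and v(x,t) = −δ a(t) b. Then for almost every t ∈ [0,1] and all x ∈ ℝ^d, ∂_t q_t(x) + div(q_t(x) v(x,t)) = 0. -/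

import Mathlib

open MeasureTheory
open scoped RealInnerProductSpace

/-- `Euc d` is the Euclidean space `ℝ^d`. -/
abbrev Euc (d : ℕ) := EuclideanSpace ℝ (Fin d)

/-- Divergence of a vector field: `div F x = ∑ i ∂F_i/∂x_i`. -/
noncomputable def vecDiv {d : ℕ} (F : Euc d → Euc d) (x : Euc d) : ℝ :=
  ∑ i, fderiv ℝ F x (EuclideanSpace.single i 1) i

/-- Stein score of a positive density: `∇ log p`. -/
noncomputable def steinScore {d : ℕ} (p : Euc d → ℝ) (x : Euc d) : Euc d :=
  gradient (fun y => Real.log (p y)) x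

/-- Kullback–Leibler divergence between densities on `ℝ^d`:
`KL(p‖q) = ∫ p(x) log (p(x)/q(x)) dx`. -/
noncomputable def KLdiv {d : ℕ} (p q : Euc d → ℝ) : ℝ :=
  ∫ x, p x * Real.log (p x / q x)

lemma gauss_mgf (d : ℕ) (w : Euc d) (s : ℝ) :
    ∫ x : Euc d, Real.exp (-(1/2) * ‖x‖^2 + s * ⟪w, x⟫) =
      (2*Real.pi) ^ ((d:ℝ)/2) * Real.exp (s^2 * ‖w‖^2 / 2) := by
  have hb : (0:ℝ) < (1/2 : ℂ).re := by norm_num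
  have h := GaussianFourier.integral_cexp_neg_mul_sq_norm_add (V := Euc d) hb (s:ℂ) w
  rw [← Complex.ofReal_inj]
  have h0 : ∫ x : Euc d, ((Real.exp (-(1/2) * ‖x‖^2 + s * ⟪w, x⟫) : ℝ) : ℂ)
      = ((∫ x : Euc d, Real.exp (-(1/2) * ‖x‖^2 + s * ⟪w, x⟫) : ℝ) : ℂ) := integral_ofReal
  rw [← h0]
  have h1 : ∀ x : Euc d, ((Real.exp (-(1/2) * ‖x‖^2 + s * ⟪w, x⟫) : ℝ) : ℂ)
      = Complex.exp (-(1/2 : ℂ) * ‖x‖^2 + (s:ℂ) * (⟪w, x⟫ : ℝ)) := by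
    intro x
    rw [Complex.ofReal_exp]
    push_cast
    ring_nf
  simp_rw [h1]
  rw [h]
  have hd : (Module.finrank ℝ (Euc d)) = d := by simp
  rw [hd]
  have h2 : (↑Real.pi / (1/2 : ℂ)) = ((2*Real.pi : ℝ) : ℂ) := by push_cast; ring
  rw [h2]
  have h3 : ((2*Real.pi : ℝ) : ℂ) ^ ((d:ℂ)/2) = (((2*Real.pi : ℝ) ^ ((d:ℝ)/2) : ℝ) : ℂ) := by
    rw [Complex.ofReal_cpow (by positivity)]
    push_cast
    ring_nf
  rw [h3]
  have h4 : ((s:ℂ)^2 * (‖w‖:ℂ)^2 / (4 * (1/2))) = ((s^2 * ‖w‖^2/2 : ℝ) : ℂ) := by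
    push_cast; ring
  rw [h4, ← Complex.ofReal_exp]
  push_cast
  ring

lemma sum_apply_single {d : ℕ} (M : Euc d →L[ℝ] ℝ) (w : Euc d) :
    ∑ i, M (EuclideanSpace.single i 1) * w i = M w := by
  conv_rhs => rw [← (EuclideanSpace.basisFun (Fin d) ℝ).sum_repr w]
  rw [map_sum]
  refine Finset.sum_congr rfl fun i _ => ?_
  rw [_root_.map_smul]
  simp [EuclideanSpace.basisFun_apply, EuclideanSpace.basisFun_repr, mul_comm]

/-- **Tilted Gaussian path satisfies the continuity equation.**
With `p₀ = N(0, I_d)`, `a(t) = 0` on `[0,τ]` and `a(t) = η e^{δ(t−τ)}` on `(τ,1]`,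
`ψ_t(x) = a(t) bᵀx`, `Z_t = ∫ p₀ e^{−ψ_t}`, `q_t = Z_t⁻¹ p₀ e^{−ψ_t}` and
`v(x,t) = −δ a(t) b`, one has, for almost every `t ∈ [0,1]` and all `x`,
`∂_t q_t(x) + div(q_t(x) v(x,t)) = 0`. -/
theorem tilted_gaussian_continuity_equation
    (d : ℕ) (b : Euc d) (δ τ η : ℝ)
    (hδ : 0 < δ) (hτ : τ ∈ Set.Ioo (0:ℝ) 1) (hη : 0 < η)
    (a : ℝ → ℝ)
    (ha0 : ∀ t ∈ Set.Icc (0:ℝ) τ, a t = 0)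
    (ha1 : ∀ t ∈ Set.Ioc τ (1:ℝ), a t = η * Real.exp (δ * (t - τ)))
    (p₀ : Euc d → ℝ)
    (hp₀ : ∀ x, p₀ x = (2 * Real.pi) ^ (-(d:ℝ)/2) * Real.exp (-‖x‖^2 / 2))
    (Z : ℝ → ℝ)
    (hZ : ∀ t, Z t = ∫ x, p₀ x * Real.exp (-(a t * ⟪b, x⟫)))
    (q : ℝ → Euc d → ℝ)
    (hq : ∀ t x, q t x = (Z t)⁻¹ * p₀ x * Real.exp (-(a t * ⟪b, x⟫)))
    (v : Euc d → ℝ → Euc d)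
    (hv : ∀ x t, v x t = -((δ * a t) • b)) :
    ∀ᵐ t ∂(volume.restrict (Set.Icc (0:ℝ) 1)),
      ∀ x, HasDerivAt (fun s => q s x) (-(vecDiv (fun y => q t y • v y t) x)) t := by
  -- closed form for Z
  have hZ' : ∀ t, Z t = Real.exp ((a t)^2 * ‖b‖^2 / 2) := by
    intro t
    rw [hZ t]
    have heq : ∀ x : Euc d, p₀ x * Real.exp (-(a t * ⟪b, x⟫)) =
        (2*Real.pi) ^ (-(d:ℝ)/2) * Real.exp (-(1/2) * ‖x‖^2 + (-(a t)) * ⟪b, x⟫) := by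
      intro x
      rw [hp₀ x, mul_assoc, ← Real.exp_add]
      congr 2
      ring
    simp_rw [heq]
    rw [MeasureTheory.integral_const_mul, gauss_mgf d b (-(a t))]
    rw [← mul_assoc, ← Real.rpow_add (by positivity),
      show -(d:ℝ)/2 + (d:ℝ)/2 = 0 by ring, Real.rpow_zero, one_mul, neg_sq]
  -- closed form for q
  have hq' : ∀ s x, q s x = p₀ x * Real.exp (-((a s)^2 * (‖b‖^2/2) + a s * ⟪b, x⟫)) := by
    intro s x
    have hiz : (Z s)⁻¹ = Real.exp (-((a s)^2 * (‖b‖^2/2))) := by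
      rw [hZ' s, ← Real.exp_neg]
      congr 1
      ring
    rw [hq s x, hiz,
      show Real.exp (-((a s)^2 * (‖b‖^2/2))) * p₀ x * Real.exp (-(a s * ⟪b, x⟫))
        = p₀ x * (Real.exp (-((a s)^2 * (‖b‖^2/2))) * Real.exp (-(a s * ⟪b, x⟫))) from by ring,
      ← Real.exp_add]
    congr 2
    ring
  -- a.e. reduction
  have hae : ∀ᵐ t ∂(volume.restrict (Set.Icc (0:ℝ) 1)),
      t ∈ Set.Ioo (0:ℝ) τ ∪ Set.Ioo τ 1 := by
    have h1 : ∀ᵐ t ∂(volume.restrict (Set.Icc (0:ℝ) 1)), t ∈ Set.Icc (0:ℝ) 1 :=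
      ae_restrict_mem measurableSet_Icc
    have hz : (volume : Measure ℝ) ({0, 1, τ} : Set ℝ) = 0 :=
      (Set.toFinite _).measure_zero _
    have h2 : ∀ᵐ t ∂(volume.restrict (Set.Icc (0:ℝ) 1)), t ∉ ({0, 1, τ} : Set ℝ) :=
      ae_restrict_of_ae (measure_eq_zero_iff_ae_notMem.mp hz)
    filter_upwards [h1, h2] with t ht hns
    simp only [Set.mem_insert_iff, Set.mem_singleton_iff, not_or] at hns
    obtain ⟨h0, h1', hτ'⟩ := hns
    rcases lt_or_gt_of_ne hτ' with h | h
    · exact Or.inl ⟨lt_of_le_of_ne ht.1 (Ne.symm h0), h⟩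
    · exact Or.inr ⟨h, lt_of_le_of_ne ht.2 h1'⟩
  filter_upwards [hae] with t ht
  intro x
  -- derivative of a
  have ha' : HasDerivAt a (δ * a t) t := by
    rcases ht with h | h
    · have he : (fun _ : ℝ => (0:ℝ)) =ᶠ[nhds t] a := by
        filter_upwards [isOpen_Ioo.mem_nhds h] with s hs
        exact (ha0 s ⟨hs.1.le, hs.2.le⟩).symm
      have h0 : δ * a t = 0 := by rw [ha0 t ⟨h.1.le, h.2.le⟩]; ring
      rw [h0]
      exact (hasDerivAt_const t (0:ℝ)).congr_of_eventuallyEq he.symm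
    · have he : (fun s : ℝ => η * Real.exp (δ * (s - τ))) =ᶠ[nhds t] a := by
        filter_upwards [isOpen_Ioo.mem_nhds h] with s hs
        exact (ha1 s ⟨hs.1, hs.2.le⟩).symm
      have h1 : HasDerivAt (fun s : ℝ => δ * (s - τ)) δ t := by
        simpa using ((hasDerivAt_id t).sub_const τ).const_mul δ
      have h2 : HasDerivAt (fun s : ℝ => η * Real.exp (δ * (s - τ)))
          (η * (Real.exp (δ * (t - τ)) * δ)) t := (h1.exp).const_mul η
      have h3 : δ * a t = η * (Real.exp (δ * (t - τ)) * δ) := by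
        rw [ha1 t ⟨h.1, h.2.le⟩]; ring
      rw [h3]
      exact h2.congr_of_eventuallyEq he.symm
  -- time derivative of q
  have h2 : HasDerivAt (fun s => (a s)^2) (2 * a t * (δ * a t)) t := by
    simpa using ha'.fun_pow 2
  have h3 : HasDerivAt (fun s => -((a s)^2 * (‖b‖^2/2) + a s * ⟪b, x⟫))
      (-((2 * a t * (δ * a t)) * (‖b‖^2/2) + (δ * a t) * ⟪b, x⟫)) t :=
    ((h2.mul_const (‖b‖^2/2)).add (ha'.mul_const ⟪b, x⟫)).neg
  have h4 : HasDerivAt (fun s => p₀ x * Real.exp (-((a s)^2 * (‖b‖^2/2) + a s * ⟪b, x⟫)))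
      (p₀ x * (Real.exp (-((a t)^2 * (‖b‖^2/2) + a t * ⟪b, x⟫)) *
        (-((2 * a t * (δ * a t)) * (‖b‖^2/2) + (δ * a t) * ⟪b, x⟫)))) t :=
    (h3.exp).const_mul (p₀ x)
  -- divergence computation
  set w : Euc d := -((δ * a t) • b) with hw
  have hvw : ∀ y : Euc d, v y t = w := fun y => hv y t
  set K : ℝ := (2*Real.pi) ^ (-(d:ℝ)/2) * Real.exp (-((a t)^2 * (‖b‖^2/2))) with hK
  set r : Euc d → ℝ := fun y => -((1/2) * ‖y‖^2 + a t * ⟪b, y⟫) with hr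
  have hqt : ∀ y, q t y = K * Real.exp (r y) := by
    intro y
    rw [hq' t y, hp₀ y, hK, hr, mul_assoc, ← Real.exp_add, mul_assoc, ← Real.exp_add]
    congr 2
    ring
  set L : Euc d →L[ℝ] ℝ := -((1/2:ℝ) • (2 • innerSL ℝ x) + (a t) • innerSL ℝ b) with hL
  have hrd : HasFDerivAt r L x := by
    have hn : HasFDerivAt (fun y : Euc d => ‖y‖^2) (2 • innerSL ℝ x) x :=
      (hasStrictFDerivAt_norm_sq x).hasFDerivAt
    have hi : HasFDerivAt (fun y : Euc d => ⟪b, y⟫) (innerSL ℝ b) x :=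
      (innerSL ℝ b).hasFDerivAt
    exact ((hn.const_mul (1/2:ℝ)).add (hi.const_mul (a t))).neg
  have hqd : HasFDerivAt (fun y => q t y) (K • (Real.exp (r x) • L)) x := by
    have : HasFDerivAt (fun y => K * Real.exp (r y)) (K • (Real.exp (r x) • L)) x :=
      (hrd.exp).const_mul K
    exact this.congr_of_eventuallyEq (Filter.Eventually.of_forall (fun y => (hqt y)))
  have hF : HasFDerivAt (fun y => q t y • v y t)
      ((K • (Real.exp (r x) • L)).smulRight w) x := by
    have := hqd.smul_const w
    refine this.congr_of_eventuallyEq (Filter.Eventually.of_forall (fun y => ?_))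
    simp only [hvw]
  have hD : vecDiv (fun y => q t y • v y t) x
      = q t x * (δ * a t * (⟪b, x⟫ + a t * ‖b‖^2)) := by
    unfold vecDiv
    rw [hF.fderiv]
    have hsum : ∀ i : Fin d, (((K • (Real.exp (r x) • L)).smulRight w) (EuclideanSpace.single i 1)) i
        = (K • (Real.exp (r x) • L)) (EuclideanSpace.single i 1) * w i := by
      intro i
      simp [ContinuousLinearMap.smulRight_apply]
    simp_rw [hsum]
    rw [sum_apply_single (K • (Real.exp (r x) • L)) w]
    have hLw : L w = -((1/2) * (2 * ⟪x, w⟫) + a t * ⟪b, w⟫) := by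
      simp [hL, inner_smul_right]
    have hxw : ⟪x, w⟫ = -((δ * a t) * ⟪x, b⟫) := by
      rw [hw, inner_neg_right, real_inner_smul_right]
    have hbw : ⟪b, w⟫ = -((δ * a t) * ‖b‖^2) := by
      rw [hw, inner_neg_right, real_inner_smul_right, real_inner_self_eq_norm_sq]
    have happ : (K • (Real.exp (r x) • L)) w = K * (Real.exp (r x) * L w) := by
      simp
    rw [happ, hLw, hxw, hbw, hqt x, real_inner_comm x b]
    ring
  -- conclude
  have hfun : (fun s => q s x)
      = fun s => p₀ x * Real.exp (-((a s)^2 * (‖b‖^2/2) + a s * ⟪b, x⟫)) :=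
    funext (fun s => hq' s x)
  rw [hfun, hD, hq' t x]
  convert h4 using 1
  ring
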